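/- arXiv:2502.06792 — 3 statements merged into one kernel-verified Lean document; each statement's English description precedes it below -/
import Mathlib

section
/- For every prime p > 5, if the residues 2!, 3!, …, (p−1)! modulo p are pairwise distinct, then p ≡ 5 (mod 8). -/
/-!
Wilson's theorem pairs the factorials: `a! (p-1-a)! ≡ (-1)^(a+1)`. With `x = ((p-1)/2)!` this gives
`x² = (-1)^((p+1)/2)`; if `p ≡ 3 (mod 4)` then `x = ±1`, which are already `(p-2)!` and `(p-1)!`.
So `p ≡ 1 (mod 4)` and `x² = -1`, and the pairing shows that `-x` is not among `2!, …, (p-1)!`.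
These `p - 2` distinct nonzero residues are therefore all nonzero residues except `-x`, whence
`-x · ∏ a! = -1` by Wilson again; as the pairing also gives `∏ a! = (-1)^((p-1)/4) x`,
`(p-1)/4` must be odd.
-/

open Finset Nat

theorem FiniteField.prod_univ_erase_zero {K : Type*} [Field K] [Fintype K] [DecidableEq K] :
    ∏ x ∈ univ.erase (0 : K), x = -1 := by
  have h := congrArg Units.val (FiniteField.prod_univ_units_id_eq_neg_one (K := K))
  rw [Units.coe_prod, Units.val_neg, Units.val_one] at h
  rw [← h]
  refine prod_nbij' (fun x => if hx : x = 0 then 1 else Units.mk0 x hx) Units.val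
    ?_ ?_ ?_ ?_ ?_ <;> simp +contextual

theorem FiniteField.mul_prod_eq_neg_one_of_card {K : Type*} [Field K] [Fintype K] [DecidableEq K]
    {s : Finset K} {y : K} (hy0 : y ≠ 0) (hys : y ∉ s) (hs0 : 0 ∉ s)
    (hcard : #s + 2 = Fintype.card K) : y * ∏ x ∈ s, x = -1 := by
  have hins : insert y s = univ.erase 0 := by
    refine eq_of_subset_of_card_le ?_ ?_
    · intro x hx
      rcases mem_insert.mp hx with rfl | hx
      · simpa using hy0
      · exact mem_erase.mpr ⟨fun h => hs0 (h ▸ hx), mem_univ x⟩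
    · rw [card_insert_of_notMem hys, card_erase_of_mem (mem_univ 0), Finset.card_univ]
      omega
  rw [← prod_insert (f := fun x => x) hys, hins, FiniteField.prod_univ_erase_zero]

theorem Finset.prod_range_two_mul_add_one {M : Type*} [CommMonoid M] (f : ℕ → M) (n : ℕ) :
    ∏ a ∈ range (2 * n + 1), f a = f n * ∏ a ∈ range n, f a * f (2 * n - a) := by
  have hreflect : ∏ a ∈ range n, f (2 * n - a) = ∏ a ∈ range n, f (n + 1 + a) := by
    rw [← prod_range_reflect]
    exact prod_congr rfl fun a ha => congrArg f (by have := mem_range.mp ha; omega)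
  rw [prod_mul_distrib, hreflect, two_mul, add_assoc, prod_range_add, prod_range_succ']
  simp only [add_zero, add_assoc, add_comm 1]
  ac_rfl

theorem prod_range_two_mul_neg_one_pow_succ {R : Type*} [CommRing R] (m : ℕ) :
    ∏ a ∈ range (2 * m), (-1 : R) ^ (a + 1) = (-1) ^ m := by
  induction m with
  | zero => simp
  | succ m ih =>
    rw [Nat.mul_add_one, prod_range_succ, prod_range_succ, ih]
    simp [pow_succ, pow_mul]

namespace ZMod

variable {p : ℕ} [Fact p.Prime]

theorem factorial_mul_factorial_sub_one_sub {j : ℕ} (hj : j ≤ p - 1) :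
    (j ! : ZMod p) * ((p - 1 - j)! : ZMod p) = (-1) ^ (j + 1) := by
  have h := congrArg (Nat.cast : ℕ → ZMod p) (Nat.factorial_mul_descFactorial hj)
  rw [Nat.cast_mul, cast_descFactorial (by omega), wilsons_lemma] at h
  have hsq : ((-1 : ZMod p) ^ j) ^ 2 = 1 := by rw [← pow_mul, pow_mul', neg_one_sq, one_pow]
  linear_combination (-1 : ZMod p) ^ j * h - (j ! : ZMod p) * ((p - 1 - j)! : ZMod p) * hsq

theorem factorial_sub_two : ((p - 2)! : ZMod p) = 1 := by
  have h := factorial_mul_factorial_sub_one_sub (p := p) (j := 1)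
    (by have := (Fact.out : p.Prime).two_le; omega)
  simpa [show p - 1 - 1 = p - 2 by omega] using h

theorem factorial_half_sq (hp : p ≠ 2) :
    (((p - 1) / 2)! : ZMod p) ^ 2 = (-1) ^ ((p - 1) / 2 + 1) := by
  have hodd := Nat.odd_iff.mp ((Fact.out : p.Prime).odd_of_ne_two hp)
  rw [sq, ← factorial_mul_factorial_sub_one_sub (by omega),
    show p - 1 - (p - 1) / 2 = (p - 1) / 2 by omega]

theorem prod_range_factorial_of_mod_four_eq_one (hp : p % 4 = 1) :
    ∏ a ∈ range p, (a ! : ZMod p) = (-1) ^ (p / 4) * (((p - 1) / 2)! : ZMod p) := by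
  rw [show range p = range (2 * ((p - 1) / 2) + 1) by congr 1; omega, prod_range_two_mul_add_one,
    mul_comm, show (p - 1) / 2 = 2 * (p / 4) by omega, ← prod_range_two_mul_neg_one_pow_succ]
  congr 1
  refine prod_congr rfl fun a ha => ?_
  rw [show 2 * (2 * (p / 4)) - a = p - 1 - a by omega]
  exact factorial_mul_factorial_sub_one_sub (by have := mem_range.mp ha; omega)

end ZMod

section InjectiveFactorials

variable {p : ℕ} [Fact p.Prime]

theorem mod_four_eq_one_of_injOn_factorial (hp5 : 5 < p)
    (hinj : Set.InjOn (fun a => (a ! : ZMod p)) (Set.Icc 2 (p - 1))) :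
    p % 4 = 1 := by
  have hodd := Nat.odd_iff.mp ((Fact.out : p.Prime).odd_of_ne_two (by omega))
  by_contra hp4
  have hsq := ZMod.factorial_half_sq (p := p) (by omega)
  rw [(Nat.even_iff.mpr (by omega) : Even ((p - 1) / 2 + 1)).neg_one_pow, sq_eq_one_iff] at hsq
  rcases hsq with h | h
  · have := hinj ⟨by omega, by omega⟩ ⟨by omega, by omega⟩ (h.trans ZMod.factorial_sub_two.symm)
    omega
  · have := hinj ⟨by omega, by omega⟩ ⟨by omega, le_rfl⟩ (h.trans (ZMod.wilsons_lemma p).symm)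
    omega

theorem factorial_half_sq_eq_neg_one (hp5 : 5 < p)
    (hinj : Set.InjOn (fun a => (a ! : ZMod p)) (Set.Icc 2 (p - 1))) :
    (((p - 1) / 2)! : ZMod p) ^ 2 = -1 := by
  have hp4 := mod_four_eq_one_of_injOn_factorial hp5 hinj
  rw [ZMod.factorial_half_sq (by omega),
    (Nat.odd_iff.mpr (by omega) : Odd ((p - 1) / 2 + 1)).neg_one_pow]

theorem factorial_ne_neg_factorial_half (hp5 : 5 < p)
    (hinj : Set.InjOn (fun a => (a ! : ZMod p)) (Set.Icc 2 (p - 1)))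
    {a : ℕ} (ha : a ∈ Set.Icc 2 (p - 1)) :
    (a ! : ZMod p) ≠ -((p - 1) / 2)! := by
  have : Fact (2 < p) := ⟨by omega⟩
  have hp4 := mod_four_eq_one_of_injOn_factorial hp5 hinj
  have hx := factorial_half_sq_eq_neg_one hp5 hinj
  set x : ZMod p := ((((p - 1) / 2)! : ℕ) : ZMod p)
  intro h
  -- `(p-1-a)! = ±x` is not `1`, so injectivity forces `p-1-a ∈ {a, (p-1)/2}`.
  have hb : ((p - 1 - a)! : ZMod p) = (-1) ^ (a + 1) * x := by
    have hab := ZMod.factorial_mul_factorial_sub_one_sub (p := p) ha.2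
    rw [h] at hab
    linear_combination x * hab + ((p - 1 - a)! : ZMod p) * hx
  by_cases hb2 : p - 1 - a < 2
  · rw [Nat.factorial_eq_one.mpr (by omega), Nat.cast_one] at hb
    have hsq := congrArg (· ^ 2) hb
    simp only [one_pow, mul_pow, ← pow_mul, pow_mul', neg_one_sq, one_pow, one_mul, hx] at hsq
    exact ZMod.neg_one_ne_one hsq.symm
  rcases Nat.even_or_odd a with ha_even | ha_odd
  · rw [ha_even.add_one.neg_one_pow, neg_one_mul, ← h] at hb
    have hba := hinj ⟨by omega, by omega⟩ ha hb
    rw [show a = (p - 1) / 2 by omega] at h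
    exact ZMod.neg_one_ne_one (by linear_combination x * h - 2 * hx)
  · rw [ha_odd.add_one.neg_one_pow, one_mul] at hb
    have hba := hinj ⟨by omega, by omega⟩ ⟨by omega, by omega⟩ hb
    have := Nat.odd_iff.mp ha_odd
    omega

theorem neg_factorial_half_mul_prod_factorial (hp5 : 5 < p)
    (hinj : Set.InjOn (fun a => (a ! : ZMod p)) (Set.Icc 2 (p - 1))) :
    -((((p - 1) / 2)! : ℕ) : ZMod p) * ∏ a ∈ Ico 2 p, (a ! : ZMod p) = -1 := by
  have hx := factorial_half_sq_eq_neg_one hp5 hinj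
  have hinj' : Set.InjOn (fun a => (a ! : ZMod p)) (Ico 2 p) :=
    hinj.mono fun a ha => by simp only [coe_Ico, Set.mem_Ico] at ha; exact ⟨ha.1, by omega⟩
  rw [← prod_image (f := fun v : ZMod p => v) hinj']
  apply FiniteField.mul_prod_eq_neg_one_of_card
  · exact neg_ne_zero.mpr fun h => by simp [h] at hx
  · simp only [mem_image, mem_Ico, not_exists, not_and]
    exact fun a ha => factorial_ne_neg_factorial_half hp5 hinj ⟨ha.1, by omega⟩
  · simp only [mem_image, mem_Ico, not_exists, not_and, ZMod.natCast_eq_zero_iff,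
      (Fact.out : p.Prime).dvd_factorial]
    omega
  · rw [Finset.card_image_of_injOn hinj', Nat.card_Ico, ZMod.card]
    have := (Fact.out : p.Prime).two_le
    omega

end InjectiveFactorials

/-- For every prime `p > 5`, if the residues `2!, 3!, …, (p-1)!` modulo `p`
are pairwise distinct, then `p ≡ 5 (mod 8)`. -/
theorem pairwise_distinct_factorials_imp_five_mod_eight (p : ℕ)
    (hp : Nat.Prime p) (hp5 : 5 < p)
    (hdist : ∀ a b : ℕ, 2 ≤ a → a < b → b ≤ p - 1 →
      ¬ Nat.factorial a ≡ Nat.factorial b [MOD p]) :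
    p % 8 = 5 := by
  have : Fact p.Prime := ⟨hp⟩
  have : Fact (2 < p) := ⟨by omega⟩
  have hinj : Set.InjOn (fun a => (a ! : ZMod p)) (Set.Icc 2 (p - 1)) := by
    intro a ha b hb hab
    rw [ZMod.natCast_eq_natCast_iff] at hab
    by_contra hne
    rcases Nat.lt_or_gt_of_ne hne with h | h
    · exact hdist a b ha.1 h hb.2 hab
    · exact hdist b a hb.1 h ha.2 hab.symm
  have hp4 := mod_four_eq_one_of_injOn_factorial hp5 hinj
  have hx := factorial_half_sq_eq_neg_one hp5 hinj
  have hprod := neg_factorial_half_mul_prod_factorial hp5 hinj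
  have hIco : ∏ a ∈ Ico 2 p, (a ! : ZMod p) = ∏ a ∈ range p, (a ! : ZMod p) := by
    rw [← prod_range_mul_prod_Ico _ hp.two_le]
    simp [prod_range_succ]
  rw [hIco, ZMod.prod_range_factorial_of_mod_four_eq_one hp4] at hprod
  have hm : (-1 : ZMod p) ^ (p / 4) = -1 := by
    linear_combination hprod + (-1 : ZMod p) ^ (p / 4) * hx
  have := Nat.odd_iff.mp ((neg_one_pow_eq_neg_one_iff_odd ZMod.neg_one_ne_one).mp hm)
  omega
end

section
/- If a Steiner triple system on a set V contains a proper subsystem on a subset W ⊆ V with |W| = s and |V| = v, then v ≥ 2s + 1. -/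
/-!
Fix a point `x ∈ V \ W`. For `w ∈ W` the block through `x` and `w` has a third point `z`, and `z ∉ W`:
a block meeting `W` in two points is the subsystem block through them, hence lies in `W`, which `x` does
not. Two points of `W` with the same third point would lie on the block through `x` and `z`, hence put
`x` into `W` again. So `w ↦ z` injects `W` into `V \ (W ∪ {x})`, giving `|W| ≤ |V| - |W| - 1`.
-/

/-- `B` is a Steiner system with blocks of size `k` on point set `V`, where every
`t`-element subset of `V` lies in exactly one block. -/
def IsSteinerSystem {α : Type*} [DecidableEq α] (V : Finset α)
    (B : Finset (Finset α)) (k t : ℕ) : Prop :=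
  (∀ b ∈ B, b ⊆ V ∧ b.card = k) ∧
  ∀ s ⊆ V, s.card = t → ∃! b, b ∈ B ∧ s ⊆ b

theorem Finset.exists_mem_ne_ne {α : Type*} [DecidableEq α] {s : Finset α} (hs : 2 < s.card)
    (a b : α) : ∃ c ∈ s, c ≠ a ∧ c ≠ b := by
  have hpos : 0 < (s \ {a, b}).card := by
    have := Finset.le_card_sdiff {a, b} s
    have := Finset.card_le_two (a := a) (b := b)
    omega
  obtain ⟨c, hc⟩ := Finset.card_pos.mp hpos
  simp only [Finset.mem_sdiff, Finset.mem_insert, Finset.mem_singleton, not_or] at hc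
  exact ⟨c, hc.1, hc.2⟩

namespace IsSteinerSystem

variable {α : Type*} [DecidableEq α] {V W : Finset α} {B B' : Finset (Finset α)} {k k' : ℕ}

theorem exists_mem_block (h : IsSteinerSystem V B k 2) {u v : α} (hu : u ∈ V) (hv : v ∈ V)
    (huv : u ≠ v) : ∃ b ∈ B, u ∈ b ∧ v ∈ b := by
  obtain ⟨b, ⟨hb, hsub⟩, -⟩ :=
    h.2 {u, v} (Finset.insert_subset_iff.2 ⟨hu, Finset.singleton_subset_iff.2 hv⟩)
      (Finset.card_pair huv)
  exact ⟨b, hb, hsub (by simp), hsub (by simp)⟩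

theorem block_eq_of_mem (h : IsSteinerSystem V B k 2) {b c : Finset α} (hb : b ∈ B)
    (hc : c ∈ B) {u v : α} (huv : u ≠ v) (hub : u ∈ b) (hvb : v ∈ b) (huc : u ∈ c)
    (hvc : v ∈ c) : b = c := by
  have hpair : ∀ d : Finset α, u ∈ d → v ∈ d → {u, v} ⊆ d := fun d hu hv =>
    Finset.insert_subset_iff.2 ⟨hu, Finset.singleton_subset_iff.2 hv⟩
  obtain ⟨d, -, hd⟩ := h.2 {u, v} ((hpair b hub hvb).trans (h.1 b hb).1) (Finset.card_pair huv)
  rw [hd b ⟨hb, hpair b hub hvb⟩, hd c ⟨hc, hpair c huc hvc⟩]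

theorem block_subset_of_subsystem (h : IsSteinerSystem V B k 2)
    (h' : IsSteinerSystem W B' k' 2) (hsub : B' ⊆ B) {b : Finset α} (hb : b ∈ B) {u v : α}
    (hu : u ∈ W) (hv : v ∈ W) (huv : u ≠ v) (hub : u ∈ b) (hvb : v ∈ b) : b ⊆ W := by
  obtain ⟨b', hb', hub', hvb'⟩ := h'.exists_mem_block hu hv huv
  rw [h.block_eq_of_mem hb (hsub hb') huv hub hvb hub' hvb']
  exact (h'.1 b' hb').1

theorem exists_third_point_outside_subsystem (h : IsSteinerSystem V B 3 2)
    (h' : IsSteinerSystem W B' k 2) (hsub : B' ⊆ B) {x w : α} (hx : x ∈ V) (hxW : x ∉ W)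
    (hwV : w ∈ V) (hw : w ∈ W) : ∃ z ∈ (V \ W).erase x, ∃ b ∈ B, x ∈ b ∧ w ∈ b ∧ z ∈ b := by
  have hxw : x ≠ w := fun hxw => hxW (hxw ▸ hw)
  obtain ⟨b, hb, hxb, hwb⟩ := h.exists_mem_block hx hwV hxw
  obtain ⟨hbV, hbcard⟩ := h.1 b hb
  obtain ⟨z, hzb, hzx, hzw⟩ := Finset.exists_mem_ne_ne (s := b) (by omega) x w
  have hzW : z ∉ W := fun hzW =>
    hxW (h.block_subset_of_subsystem h' hsub hb hzW hw hzw hzb hwb hxb)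
  exact ⟨z, Finset.mem_erase.2 ⟨hzx, Finset.mem_sdiff.2 ⟨hbV hzb, hzW⟩⟩, b, hb, hxb, hwb, hzb⟩

theorem card_add_one_le_card_sdiff_of_subsystem (h : IsSteinerSystem V B 3 2)
    (h' : IsSteinerSystem W B' k 2) (hsub : B' ⊆ B) (hW : W ⊆ V) {x : α} (hx : x ∈ V)
    (hxW : x ∉ W) : W.card + 1 ≤ (V \ W).card := by
  have hthird : ∀ w ∈ W, ∃ z ∈ (V \ W).erase x, ∃ b ∈ B, x ∈ b ∧ w ∈ b ∧ z ∈ b := fun w hw =>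
    h.exists_third_point_outside_subsystem h' hsub hx hxW (hW hw) hw
  choose! f hf hblock using hthird
  have hinj : Set.InjOn f W := by
    intro w hw w' hw' hfw
    obtain ⟨b, hb, hxb, hwb, hzb⟩ := hblock w hw
    obtain ⟨b', hb', hxb', hwb', hzb'⟩ := hblock w' hw'
    have hxz : x ≠ f w := (Finset.mem_erase.1 (hf w hw)).1.symm
    have hbb' : b = b' := h.block_eq_of_mem hb hb' hxz hxb hzb hxb' (hfw ▸ hzb')
    by_contra hne
    exact hxW (h.block_subset_of_subsystem h' hsub hb hw hw' hne hwb (hbb' ▸ hwb') hxb)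
  calc W.card + 1 ≤ ((V \ W).erase x).card + 1 :=
        Nat.succ_le_succ (Finset.card_le_card_of_injOn f hf hinj)
    _ = (V \ W).card := Finset.card_erase_add_one (Finset.mem_sdiff.2 ⟨hx, hxW⟩)

end IsSteinerSystem

theorem sts_subsystem_doyen_wilson_general {α : Type*} [DecidableEq α]
    (V W : Finset α) (B B' : Finset (Finset α))
    (h : IsSteinerSystem V B 3 2)
    (hW : W ⊆ V) (hWne : W ≠ V)
    (hsub : B' ⊆ B) (h' : IsSteinerSystem W B' 3 2) :
    2 * W.card + 1 ≤ V.card := by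
  obtain ⟨x, hxV, hxW⟩ : ∃ x ∈ V, x ∉ W :=
    Finset.not_subset.1 fun hVW => hWne (hW.antisymm hVW)
  have hcount := h.card_add_one_le_card_sdiff_of_subsystem h' hsub hW hxV hxW
  rw [Finset.card_sdiff_of_subset hW] at hcount
  have := Finset.card_le_card hW
  omega

/-- If a Steiner triple system on `V` contains a proper subsystem on `W ⊆ V`
(`|W| ≥ 3`, `W ≠ V`), then `|V| ≥ 2|W| + 1`. -/
theorem sts_subsystem_doyen_wilson {α : Type*} [DecidableEq α]
    (V W : Finset α) (B B' : Finset (Finset α))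
    (h : IsSteinerSystem V B 3 2)
    (hW : W ⊆ V) (hWcard : 3 ≤ W.card) (hWne : W ≠ V)
    (hsub : B' ⊆ B) (h' : IsSteinerSystem W B' 3 2) :
    2 * W.card + 1 ≤ V.card :=
  sts_subsystem_doyen_wilson_general V W B B' h hW hWne hsub h'
end

section
/- Two Steiner triple systems on the same 9-element set are always isomorphic (the affine plane AG(2,3) is the unique STS(9) up to isomorphism). -/
/-- `f` is an isomorphism of the block system `(V₁, B₁)` with `(V₂, B₂)`. -/
def IsSTSIso {α β : Type*} [DecidableEq α] [DecidableEq β]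
    (V₁ : Finset α) (B₁ : Finset (Finset α))
    (V₂ : Finset β) (B₂ : Finset (Finset β)) (f : α → β) : Prop :=
  Set.BijOn f (V₁ : Set α) (V₂ : Set β) ∧
  ∀ b ⊆ V₁, (b ∈ B₁ ↔ b.image f ∈ B₂)

/-!
Sending two points to the third point of their block turns a Steiner triple system into a
Steiner quasigroup (`x ∘ x = x`, `x ∘ y = y ∘ x`, `x ∘ (x ∘ y) = y`) whose triples
`{x, y, x ∘ y}` are the blocks, so it suffices to show that every Steiner quasigroup of order 9
is isomorphic to the affine plane `AG(2,3)`, i.e. `x ∘ y = -(x + y)` on `ZMod 3 × ZMod 3`.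

Take `p₀ ≠ p₁` and `q` off the line through them, and write `p₂ = p₀ ∘ p₁`. The seven points
`p₀, p₁, p₂, q, q ∘ p₀, q ∘ p₁, q ∘ p₂` are distinct, and `u = p₂ ∘ (q ∘ p₀)` is not one of
them; so `u` and `q ∘ u` complete them to all nine points, which gives coordinates in which six
lines of `AG(2,3)` are blocks. These six lines force all the others: repeatedly, some line is
the only one left through one of its pairs, and two rounds of this reach every pair.
-/

open Finset

namespace IsSTSIso

variable {α β γ : Type*} [DecidableEq α] [DecidableEq β] [DecidableEq γ]
  {V₁ : Finset α} {B₁ : Finset (Finset α)} {V₂ : Finset β} {B₂ : Finset (Finset β)}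
  {V₃ : Finset γ} {B₃ : Finset (Finset γ)} {f : α → β} {g : β → γ}

theorem comp (hf : IsSTSIso V₁ B₁ V₂ B₂ f) (hg : IsSTSIso V₂ B₂ V₃ B₃ g) :
    IsSTSIso V₁ B₁ V₃ B₃ (g ∘ f) := by
  refine ⟨hg.1.comp hf.1, fun b hb => ?_⟩
  rw [hf.2 b hb, hg.2 _ (image_subset_iff.2 fun x hx => hf.1.mapsTo (hb hx)), image_image]

theorem symm [Nonempty α] (hf : IsSTSIso V₁ B₁ V₂ B₂ f) :
    IsSTSIso V₂ B₂ V₁ B₁ (Function.invFunOn f V₁) := by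
  have hinv := hf.1.invOn_invFunOn
  have hmaps := hf.1.surjOn.mapsTo_invFunOn
  refine ⟨hinv.symm.bijOn hmaps hf.1.mapsTo, fun b hb => ?_⟩
  have hgb : b.image (Function.invFunOn f V₁) ⊆ V₁ := image_subset_iff.2 fun y hy => hmaps (hb hy)
  have hfgb : (b.image (Function.invFunOn f V₁)).image f = b := by
    rw [image_image]
    exact (image_congr fun y hy => hinv.2 (hb hy)).trans image_id'
  rw [hf.2 _ hgb, hfgb]

end IsSTSIso

structure IsSteinerQuasigroup {Q : Type*} (op : Q → Q → Q) : Prop where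
  op_self : ∀ x, op x x = x
  op_comm : ∀ x y, op x y = op y x
  op_op : ∀ x y, op x (op x y) = y

namespace IsSteinerQuasigroup

variable {Q : Type*} {op op₀ : Q → Q → Q}

theorem op_eq_iff (hop : IsSteinerQuasigroup op) {x y z : Q} : op x y = z ↔ op x z = y := by
  constructor <;> rintro rfl <;> exact hop.op_op _ _

theorem eq_of_op_eq_op (hop : IsSteinerQuasigroup op) (hop₀ : IsSteinerQuasigroup op₀) {x y : Q}
    (h : op x (op₀ x y) = op₀ x (op₀ x y)) : op x y = op₀ x y := by
  rwa [hop₀.op_op, ← hop.op_eq_iff] at h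

theorem eq_of_forall_or (hop : IsSteinerQuasigroup op) (hop₀ : IsSteinerQuasigroup op₀) {x y : Q}
    (h : ∀ w, w = op₀ x y ∨ op x w = op₀ x w ∨ op y w = op₀ y w) : op x y = op₀ x y := by
  rcases h (op x y) with h | h | h
  · exact h
  · rw [hop.op_op, eq_comm, ← hop₀.op_eq_iff] at h
    exact h.symm
  · rw [hop.op_comm x, hop.op_op, eq_comm, ← hop₀.op_eq_iff, hop₀.op_comm] at h
    rw [h, hop.op_comm]

theorem eq_of_mem_line (hop : IsSteinerQuasigroup op) (hop₀ : IsSteinerQuasigroup op₀)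
    {a b x y : Q} (hab : op a b = op₀ a b) (hx : x ∈ [a, b, op₀ a b]) (hy : y ∈ [a, b, op₀ a b]) :
    op x y = op₀ x y := by
  have := hop.op_self; have := hop.op_comm; have := hop.op_op
  have := hop₀.op_self; have := hop₀.op_comm; have := hop₀.op_op
  simp only [List.mem_cons, List.not_mem_nil, or_false] at hx hy
  rcases hx with rfl | rfl | rfl <;> rcases hy with rfl | rfl | rfl <;> grind

section Forcing

variable [Fintype Q] [DecidableEq Q]

/-- `K` marks the pairs whose third point is already known to be the one given by `op₀`. The third
point of `x, y` is forced to be `op₀ x y` once every other candidate lies on a known pair with `x`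
or `y`; `forceStep` adds the whole line through each forced pair. -/
def forced (op₀ : Q → Q → Q) (K : Q → Q → Bool) (x y : Q) : Bool :=
  decide (∀ w, w = op₀ x y ∨ K x w ∨ K y w)

def forceStep (op₀ : Q → Q → Q) (K : Q → Q → Bool) (x y : Q) : Bool :=
  K x y || forced op₀ K x y || forced op₀ K x (op₀ x y) || forced op₀ K y (op₀ x y)

theorem eq_of_forced (hop : IsSteinerQuasigroup op) (hop₀ : IsSteinerQuasigroup op₀)
    {K : Q → Q → Bool} (hK : ∀ x y, K x y → op x y = op₀ x y) {x y : Q}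
    (h : forced op₀ K x y) : op x y = op₀ x y := by
  refine hop.eq_of_forall_or hop₀ fun w => ?_
  simp only [forced, decide_eq_true_eq] at h
  exact (h w).imp_right (Or.imp (hK x w) (hK y w))

theorem eq_of_forceStep (hop : IsSteinerQuasigroup op) (hop₀ : IsSteinerQuasigroup op₀)
    {K : Q → Q → Bool} (hK : ∀ x y, K x y → op x y = op₀ x y) (x y : Q)
    (h : forceStep op₀ K x y) : op x y = op₀ x y := by
  simp only [forceStep, Bool.or_eq_true] at h
  rcases h with ((h | h) | h) | h
  · exact hK x y h
  · exact hop.eq_of_forced hop₀ hK h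
  · exact hop.eq_of_op_eq_op hop₀ (hop.eq_of_forced hop₀ hK h)
  · rw [hop₀.op_comm] at h
    rw [hop.op_comm, hop₀.op_comm]
    exact hop.eq_of_op_eq_op hop₀ (hop.eq_of_forced hop₀ hK h)

end Forcing

end IsSteinerQuasigroup

abbrev AG23 := ZMod 3 × ZMod 3

namespace AG23

open IsSteinerQuasigroup

def third (x y : AG23) : AG23 := -(x + y)

theorem isSteinerQuasigroup_third : IsSteinerQuasigroup third := by
  refine ⟨by decide, fun x y => ?_, fun x y => ?_⟩ <;> simp only [third] <;> abel

def framePairs : List (AG23 × AG23) :=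
  [((0, 0), (1, 0)), ((0, 1), (0, 0)), ((0, 1), (1, 0)), ((0, 1), (2, 0)), ((0, 1), (1, 1)),
    ((2, 0), (0, 2))]

def onFrameLine (x y : AG23) : Bool :=
  framePairs.any fun p => decide (x ∈ [p.1, p.2, third p.1 p.2] ∧ y ∈ [p.1, p.2, third p.1 p.2])

theorem eq_third_of_frame {op : AG23 → AG23 → AG23} (hop : IsSteinerQuasigroup op)
    (hframe : ∀ p ∈ framePairs, op p.1 p.2 = third p.1 p.2) : op = third := by
  have h₀ : ∀ x y, onFrameLine x y → op x y = third x y := by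
    intro x y hxy
    obtain ⟨p, hp, hxp, hyp⟩ : ∃ p ∈ framePairs, x ∈ [p.1, p.2, third p.1 p.2] ∧
        y ∈ [p.1, p.2, third p.1 p.2] := by simpa [onFrameLine] using hxy
    exact hop.eq_of_mem_line isSteinerQuasigroup_third (hframe p hp) hxp hyp
  have h₁ := hop.eq_of_forceStep isSteinerQuasigroup_third h₀
  have h₂ := hop.eq_of_forceStep isSteinerQuasigroup_third h₁
  have hall : ∀ x y, forceStep third (forceStep third onFrameLine) x y = true := by decide +kernel
  exact funext₂ fun x y => h₂ x y (hall x y)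

end AG23

namespace IsSteinerQuasigroup

variable {Q : Type*} {op : Q → Q → Q}

theorem op_eq_of_compl_eq_pair [Fintype Q] [DecidableEq Q] (hop : IsSteinerQuasigroup op)
    {S : Finset Q} {a b r : Q} (hab : Sᶜ = {a, b}) (hr : r ∈ S) (hrS : ∀ x ∈ S, op r x ∈ S) :
    op r a = b := by
  have ha : a ∉ S := by simpa using hab.ge (mem_insert_self a {b})
  have hra : op r a ∉ S := fun h => ha (hop.op_op r a ▸ hrS _ h)
  have hra' : op r a ≠ a := by
    rw [ne_eq, hop.op_comm, hop.op_eq_iff, hop.op_self]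
    exact fun h => ha (h ▸ hr)
  simpa [hab, hra'] using mem_compl.2 hra

/-- The point with coordinates `(i, j)` is the entry in row `j`, column `i`. -/
def frameMap (op : Q → Q → Q) (p₀ p₁ q : Q) (x : AG23) : Q :=
  ![![p₀, p₁, op p₀ p₁],
    ![q, op (op p₀ p₁) (op q p₀), op q (op (op p₀ p₁) (op q p₀))],
    ![op q p₀, op q (op p₀ p₁), op q p₁]] x.2 x.1

theorem frameMap_third (p₀ p₁ q : Q) : ∀ p ∈ AG23.framePairs,
    frameMap op p₀ p₁ q (AG23.third p.1 p.2) =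
      op (frameMap op p₀ p₁ q p.1) (frameMap op p₀ p₁ q p.2) := by
  simp only [AG23.framePairs, List.mem_cons, List.not_mem_nil, or_false, forall_eq_or_imp,
    forall_eq]
  exact ⟨rfl, rfl, rfl, rfl, rfl, rfl⟩

theorem nodup_frame (hop : IsSteinerQuasigroup op) {p₀ p₁ q : Q} (h01 : p₀ ≠ p₁)
    (hq : q ∉ [p₀, p₁, op p₀ p₁]) :
    [p₀, p₁, op p₀ p₁, q, op q p₀, op q p₁, op q (op p₀ p₁)].Nodup := by
  have := hop.op_self; have := hop.op_comm; have := hop.op_op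
  simp only [List.mem_cons, List.not_mem_nil, or_false, not_or] at hq
  simp only [List.nodup_cons, List.mem_cons, List.not_mem_nil, or_false, not_or, List.nodup_nil,
    and_true]
  and_intros <;> grind

theorem op_notMem_frame [Fintype Q] [DecidableEq Q] (hop : IsSteinerQuasigroup op)
    (hQ : Fintype.card Q = 9) {p₀ p₁ q : Q} (h01 : p₀ ≠ p₁) (hq : q ∉ [p₀, p₁, op p₀ p₁]) :
    op (op p₀ p₁) (op q p₀) ∉ [p₀, p₁, op p₀ p₁, q, op q p₀, op q p₁, op q (op p₀ p₁)] := by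
  set S := [p₀, p₁, op p₀ p₁, q, op q p₀, op q p₁, op q (op p₀ p₁)].toFinset
  have hS : S.card = 7 := List.toFinset_card_of_nodup (hop.nodup_frame h01 hq)
  obtain ⟨a, b, -, hab⟩ := card_eq_two.1 (by rw [card_compl, hQ, hS] : Sᶜ.card = 2)
  have := hop.op_self; have := hop.op_comm; have := hop.op_op
  simp only [List.mem_cons, List.not_mem_nil, or_false, not_or] at hq
  have hqa : op q a = b := hop.op_eq_of_compl_eq_pair hab (by simp [S]) (by simp [S]; grind)
  -- Were it in `S`, then `S` would be closed under `p₀ ∘ p₁` as it is under `q`, and both would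
  -- send `a` to `b`.
  intro hu
  have hp₂a : op (op p₀ p₁) a = b :=
    hop.op_eq_of_compl_eq_pair hab (by simp [S]) (by simp [S]; grind)
  grind

theorem frameMap_injective [Fintype Q] [DecidableEq Q] (hop : IsSteinerQuasigroup op)
    (hQ : Fintype.card Q = 9) {p₀ p₁ q : Q} (h01 : p₀ ≠ p₁) (hq : q ∉ [p₀, p₁, op p₀ p₁]) :
    Function.Injective (frameMap op p₀ p₁ q) := by
  have h7 := hop.nodup_frame h01 hq
  have hu := hop.op_notMem_frame hQ h01 hq
  have := hop.op_self; have := hop.op_comm; have := hop.op_op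
  simp only [List.mem_cons, List.not_mem_nil, or_false, not_or] at hq hu
  simp only [List.nodup_cons, List.mem_cons, List.not_mem_nil, or_false, not_or, List.nodup_nil,
    and_true] at h7
  intro x y hxy
  fin_cases x <;> fin_cases y <;> simp [frameMap] at hxy <;> grind

theorem comap {Q' : Type*} (hop : IsSteinerQuasigroup op) (e : Q' ≃ Q) :
    IsSteinerQuasigroup fun x y => e.symm (op (e x) (e y)) :=
  ⟨by simp [hop.op_self], by simp [hop.op_comm], by simp [hop.op_op]⟩

theorem exists_frame [Fintype Q] [DecidableEq Q] (hQ : Fintype.card Q = 9) :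
    ∃ p₀ p₁ q : Q, p₀ ≠ p₁ ∧ q ∉ [p₀, p₁, op p₀ p₁] := by
  obtain ⟨p₀, p₁, h01⟩ := Fintype.exists_pair_of_one_lt_card (by omega : 1 < Fintype.card Q)
  have hcard : [p₀, p₁, op p₀ p₁].toFinset.card < (univ : Finset Q).card :=
    (List.toFinset_card_le _).trans_lt (by simp [hQ])
  obtain ⟨q, -, hq⟩ := exists_mem_notMem_of_card_lt_card hcard
  exact ⟨p₀, p₁, q, h01, by simpa using hq⟩

theorem exists_equiv_AG23 [Fintype Q] [DecidableEq Q] (hop : IsSteinerQuasigroup op)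
    (hQ : Fintype.card Q = 9) : ∃ e : AG23 ≃ Q, ∀ x y, e (AG23.third x y) = op (e x) (e y) := by
  obtain ⟨p₀, p₁, q, h01, hq⟩ := exists_frame (op := op) hQ
  let e := Equiv.ofBijective _ ((Fintype.bijective_iff_injective_and_card _).2
    ⟨hop.frameMap_injective hQ h01 hq, by simp [hQ]⟩)
  have hthird := AG23.eq_third_of_frame (hop.comap e) fun p hp => by
    simp [e, ← frameMap_third p₀ p₁ q p hp]
  exact ⟨e, fun x y => by simp [← hthird]⟩

end IsSteinerQuasigroup

def blocksOf {Q : Type*} [Fintype Q] [DecidableEq Q] (op : Q → Q → Q) : Finset (Finset Q) :=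
  univ.offDiag.image fun p => {p.1, p.2, op p.1 p.2}

namespace IsSteinerSystem

variable {α : Type*} [DecidableEq α] {V : Finset α} {B : Finset (Finset α)}

theorem eq_of_pair_subset (hB : IsSteinerSystem V B 3 2) {b b' : Finset α} (hb : b ∈ B)
    (hb' : b' ∈ B) {x y : α} (hxy : x ≠ y) (h : {x, y} ⊆ b) (h' : {x, y} ⊆ b') : b = b' :=
  (hB.2 {x, y} (h.trans (hB.1 b hb).1) (card_pair hxy)).unique ⟨hb, h⟩ ⟨hb', h'⟩

theorem ne_of_insert_mem (hB : IsSteinerSystem V B 3 2) {x y z : α} (h : {x, y, z} ∈ B) :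
    x ≠ y ∧ x ≠ z ∧ y ≠ z := by
  have h3 := (hB.1 _ h).2
  refine ⟨?_, ?_, ?_⟩ <;> rintro rfl <;> simp at h3 <;> grind [card_le_two]

theorem exists_insert_mem (hB : IsSteinerSystem V B 3 2) {x y : α} (hx : x ∈ V) (hy : y ∈ V)
    (hxy : x ≠ y) : ∃ z, ({x, y, z} : Finset α) ∈ B := by
  obtain ⟨b, ⟨hb, hxyb⟩, -⟩ := hB.2 {x, y} (by simp [insert_subset_iff, hx, hy]) (card_pair hxy)
  obtain ⟨z, hz⟩ := card_eq_one.1 (by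
    rw [card_sdiff_of_subset hxyb, (hB.1 b hb).2, card_pair hxy] : (b \ {x, y}).card = 1)
  refine ⟨z, ?_⟩
  rw [← sdiff_union_of_subset hxyb, hz] at hb
  convert hb using 1
  ext; simp; tauto

theorem eq_of_insert_mem (hB : IsSteinerSystem V B 3 2) {x y z z' : α} (hxy : x ≠ y)
    (h : {x, y, z} ∈ B) (h' : {x, y, z'} ∈ B) : z = z' := by
  have hxyz {w : α} : ({x, y} : Finset α) ⊆ {x, y, w} := by simp [insert_subset_iff]
  have hz : z ∈ ({x, y, z'} : Finset α) := hB.eq_of_pair_subset h h' hxy hxyz hxyz ▸ by simp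
  have := hB.ne_of_insert_mem h
  simp only [mem_insert, mem_singleton] at hz
  grind

noncomputable def thirdPoint (B : Finset (Finset α)) (x y : V) : V :=
  if h : ∃ z : V, x ≠ y ∧ ({(x : α), (y : α), (z : α)} : Finset α) ∈ B then h.choose else x

theorem insert_thirdPoint_mem (hB : IsSteinerSystem V B 3 2) {x y : V} (hxy : x ≠ y) :
    ({(x : α), (y : α), (thirdPoint B x y : α)} : Finset α) ∈ B := by
  obtain ⟨z, hz⟩ := hB.exists_insert_mem x.2 y.2 (Subtype.coe_ne_coe.2 hxy)
  have h : ∃ z : V, x ≠ y ∧ ({(x : α), (y : α), (z : α)} : Finset α) ∈ B :=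
    ⟨⟨z, (hB.1 _ hz).1 (by simp)⟩, hxy, hz⟩
  rw [thirdPoint, dif_pos h]
  exact h.choose_spec.2

theorem thirdPoint_eq (hB : IsSteinerSystem V B 3 2) {x y z : V} (hxy : x ≠ y)
    (h : ({(x : α), (y : α), (z : α)} : Finset α) ∈ B) : thirdPoint B x y = z :=
  Subtype.ext (hB.eq_of_insert_mem (Subtype.coe_ne_coe.2 hxy) (hB.insert_thirdPoint_mem hxy) h)

theorem isSteinerQuasigroup_thirdPoint (hB : IsSteinerSystem V B 3 2) :
    IsSteinerQuasigroup (thirdPoint (V := V) B) := by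
  have thirdPoint_self (x : V) : thirdPoint B x x = x := by simp [thirdPoint]
  refine ⟨thirdPoint_self, fun x y => ?_, fun x y => ?_⟩
  · rcases eq_or_ne x y with rfl | hxy
    · rfl
    · refine hB.thirdPoint_eq hxy ?_
      rw [insert_comm]
      exact hB.insert_thirdPoint_mem hxy.symm
  · rcases eq_or_ne x y with rfl | hxy
    · rw [thirdPoint_self, thirdPoint_self]
    · have hmem := hB.insert_thirdPoint_mem hxy
      have hxz : x ≠ thirdPoint B x y := Subtype.coe_ne_coe.1 (hB.ne_of_insert_mem hmem).2.1
      refine hB.thirdPoint_eq hxz ?_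
      rwa [pair_comm]

theorem isSTSIso_of_equiv (hB : IsSteinerSystem V B 3 2) {Q : Type*} [Fintype Q] [DecidableEq Q]
    {op : Q → Q → Q} (e : Q ≃ V) (he : ∀ x y, e (op x y) = thirdPoint B (e x) (e y)) :
    IsSTSIso univ (blocksOf op) V B fun x => (e x : α) := by
  refine ⟨⟨fun x _ => (e x).2, fun x _ y _ h => e.injective (Subtype.ext h), fun z hz =>
    ⟨e.symm ⟨z, hz⟩, by simp⟩⟩, fun b _ => ⟨?_, fun hb => ?_⟩⟩
  · simp only [blocksOf, mem_image, mem_offDiag, mem_univ, true_and]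
    rintro ⟨⟨x, y⟩, hxy, rfl⟩
    simpa [image_insert, he] using hB.insert_thirdPoint_mem (e.injective.ne hxy)
  · have hinj : Function.Injective fun x => (e x : α) := Subtype.coe_injective.comp e.injective
    obtain ⟨x, y, z, hxy, -, -, rfl⟩ :=
      card_eq_three.1 ((card_image_of_injective b hinj).symm.trans (hB.1 _ hb).2)
    have hz : op x y = z := e.injective <| by
      rw [he]
      exact hB.thirdPoint_eq (e.injective.ne hxy) (by simpa [image_insert] using hb)
    exact mem_image.2 ⟨(x, y), by simpa using hxy, by rw [hz]⟩

theorem exists_isSTSIso_AG23 (hB : IsSteinerSystem V B 3 2) (hV : V.card = 9) :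
    ∃ e : AG23 → α, IsSTSIso univ (blocksOf AG23.third) V B e := by
  obtain ⟨e, he⟩ := hB.isSteinerQuasigroup_thirdPoint.exists_equiv_AG23 (by simpa using hV)
  exact ⟨_, hB.isSTSIso_of_equiv e he⟩

end IsSteinerSystem

/-- Any two Steiner triple systems on the same `9`-element set are isomorphic
(the affine plane `AG(2,3)` is the unique `STS(9)` up to isomorphism). -/
theorem sts9_unique {α : Type*} [DecidableEq α]
    (V : Finset α) (B₁ B₂ : Finset (Finset α)) (h : V.card = 9)
    (hB₁ : IsSteinerSystem V B₁ 3 2) (hB₂ : IsSteinerSystem V B₂ 3 2) :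
    ∃ f : α → α, IsSTSIso V B₁ V B₂ f := by
  obtain ⟨e₁, he₁⟩ := hB₁.exists_isSTSIso_AG23 h
  obtain ⟨e₂, he₂⟩ := hB₂.exists_isSTSIso_AG23 h
  exact ⟨_, he₁.symm.comp he₂⟩
end
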